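/- arXiv:1006.0159 — 2 statements merged into one kernel-verified Lean document; each statement's English description precedes it below -/
import Mathlib

section
/- Let A be an integral domain and I a nonzero ideal of A. Then A ⋈ I = {(a, a+i) : a ∈ A, i ∈ I} is an elementary divisor ring if and only if A is an elementary divisor ring and I = A. -/
/-- A commutative ring is an elementary divisor ring if every square matrix is
equivalent to a diagonal matrix via invertible matrices. -/
def IsElementaryDivisorRing (R : Type*) [CommRing R] : Prop :=
  ∀ (n : ℕ) (M : Matrix (Fin n) (Fin n) R),
    ∃ P Q : Matrix (Fin n) (Fin n) R, IsUnit P ∧ IsUnit Q ∧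
      ∃ d : Fin n → R, P * M * Q = Matrix.diagonal d

/-- A commutative ring is Hermite if any pair `a, b` can be written `a = a₁d`,
`b = b₁d` with `Ra₁ + Rb₁ = R`. -/
def IsHermiteRing (R : Type*) [CommRing R] : Prop :=
  ∀ a b : R, ∃ a₁ b₁ d : R, a = a₁ * d ∧ b = b₁ * d ∧ Ideal.span {a₁, b₁} = ⊤

/-- The amalgamation `A ⋈^f J = {(a, f a + j) | a ∈ A, j ∈ J}` as a subring of `A × B`. -/
def amalgamation {A B : Type*} [CommRing A] [CommRing B] (f : A →+* B) (J : Ideal B) :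
    Subring (A × B) where
  carrier := {p | p.2 - f p.1 ∈ J}
  mul_mem' := by
    intro p q hp hq
    have h : (p * q).2 - f (p * q).1
        = p.2 * (q.2 - f q.1) + f q.1 * (p.2 - f p.1) := by
      simp only [Prod.fst_mul, Prod.snd_mul, map_mul]; ring
    show (p * q).2 - f (p * q).1 ∈ J
    rw [h]
    exact J.add_mem (J.mul_mem_left _ hq) (J.mul_mem_left _ hp)
  one_mem' := by simp
  add_mem' := by
    intro p q hp hq
    have h : (p + q).2 - f (p + q).1 = (p.2 - f p.1) + (q.2 - f q.1) := by
      simp only [Prod.fst_add, Prod.snd_add, map_add]; ring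
    show (p + q).2 - f (p + q).1 ∈ J
    rw [h]
    exact J.add_mem hp hq
  zero_mem' := by simp
  neg_mem' := by
    intro p hp
    have h : (-p).2 - f (-p).1 = -(p.2 - f p.1) := by
      simp only [Prod.fst_neg, Prod.snd_neg, map_neg]; ring
    show (-p).2 - f (-p).1 ∈ J
    rw [h]
    exact J.neg_mem hp

/-- The subring `f(A) + J` of `B`. -/
def rangeAddIdeal {A B : Type*} [CommRing A] [CommRing B] (f : A →+* B) (J : Ideal B) :
    Subring B where
  carrier := {b | ∃ a, b - f a ∈ J}
  mul_mem' := by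
    rintro b b' ⟨a, ha⟩ ⟨a', ha'⟩
    refine ⟨a * a', ?_⟩
    have h : b * b' - f (a * a') = b * (b' - f a') + f a' * (b - f a) := by
      simp only [map_mul]; ring
    show b * b' - f (a * a') ∈ J
    rw [h]
    exact J.add_mem (J.mul_mem_left _ ha') (J.mul_mem_left _ ha)
  one_mem' := ⟨1, by simp⟩
  add_mem' := by
    rintro b b' ⟨a, ha⟩ ⟨a', ha'⟩
    refine ⟨a + a', ?_⟩
    have h : b + b' - f (a + a') = (b - f a) + (b' - f a') := by
      simp only [map_add]; ring
    show b + b' - f (a + a') ∈ J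
    rw [h]
    exact J.add_mem ha ha'
  zero_mem' := ⟨0, by simp⟩
  neg_mem' := by
    rintro b ⟨a, ha⟩
    refine ⟨-a, ?_⟩
    have h : -b - f (-a) = -(b - f a) := by simp only [map_neg]; ring
    show -b - f (-a) ∈ J
    rw [h]
    exact J.neg_mem ha

/-!
An elementary divisor ring is Bézout: diagonalizing `[[a, b], [0, 0]]` as `P M Q = D` turns
the row `(a, b)` into `w = (a, b) Q`, which generates the same ideal; as `P₀₀ w₁ = P₁₀ w₀ = 0`
and the first column of `P` is unimodular, `w₀` and `w₁` are multiples of `w₀ + w₁`.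
In `A ⋈ I`, for `0 ≠ i ∈ I`, a generator `z = r (i, 0) + s (0, i)` of the ideal of `(i, 0)`
and `(0, i)` gives `(0, i) = u z` with `u = (0, u₂)` and `u₂ s₂ = 1`, so `I ∋ u₂` is the unit
ideal. Conversely `A ⋈ A ≅ A × A`, and elementary divisor rings are stable under products and
surjective images.
-/

open Matrix

namespace Ideal

variable {R m n : Type*} [CommRing R]

theorem span_range_vecMul_le [Fintype m] (v : m → R) (Q : Matrix m n R) :
    span (Set.range (v ᵥ* Q)) ≤ span (Set.range v) := by
  rw [span_le]
  rintro _ ⟨j, rfl⟩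
  exact sum_mem _ fun i _ => mul_mem_right _ _ (subset_span ⟨i, rfl⟩)

theorem span_range_vecMul_of_isUnit [Fintype n] [DecidableEq n] (v : n → R) {Q : Matrix n n R}
    (hQ : IsUnit Q) : span (Set.range (v ᵥ* Q)) = span (Set.range v) := by
  refine le_antisymm (span_range_vecMul_le v Q) ?_
  simpa [vecMul_vecMul, mul_nonsing_inv Q ((isUnit_iff_isUnit_det Q).1 hQ)] using
    span_range_vecMul_le (v ᵥ* Q) Q⁻¹

end Ideal

namespace IsElementaryDivisorRing

variable {R S : Type*} [CommRing R] [CommRing S]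

theorem of_surjective (h : IsElementaryDivisorRing R) (f : R →+* S)
    (hf : Function.Surjective f) : IsElementaryDivisorRing S := by
  intro n M
  choose N hN using fun i j => hf (M i j)
  obtain ⟨P, Q, hP, hQ, d, hd⟩ := h n (Matrix.of N)
  have hM : M = f.mapMatrix (Matrix.of N) := by ext i j; simp [hN i j]
  refine ⟨f.mapMatrix P, f.mapMatrix Q, hP.map _, hQ.map _, fun i => f (d i), ?_⟩
  rw [hM, ← map_mul, ← map_mul, hd, RingHom.mapMatrix_apply, diagonal_map (map_zero f)]

theorem prod (hR : IsElementaryDivisorRing R) (hS : IsElementaryDivisorRing S) :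
    IsElementaryDivisorRing (R × S) := by
  intro n M
  let e :
      Matrix (Fin n) (Fin n) (R × S) ≃+* Matrix (Fin n) (Fin n) R × Matrix (Fin n) (Fin n) S :=
    RingEquiv.ofBijective ((RingHom.fst R S).mapMatrix.prod (RingHom.snd R S).mapMatrix)
      ⟨fun X Y h => by
        ext i j <;> simp [Prod.ext_iff, ← Matrix.ext_iff] at h
        exacts [h.1 i j, h.2 i j],
      fun ⟨X, Y⟩ => ⟨Matrix.of fun i j => (X i j, Y i j), by ext <;> simp⟩⟩
  have he : ∀ X, e X = (X.map Prod.fst, X.map Prod.snd) := fun _ => rfl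
  obtain ⟨P₁, Q₁, hP₁, hQ₁, d₁, hd₁⟩ := hR n (M.map Prod.fst)
  obtain ⟨P₂, Q₂, hP₂, hQ₂, d₂, hd₂⟩ := hS n (M.map Prod.snd)
  refine ⟨e.symm (P₁, P₂), e.symm (Q₁, Q₂), (Prod.isUnit_iff.2 ⟨hP₁, hP₂⟩).map e.symm,
    (Prod.isUnit_iff.2 ⟨hQ₁, hQ₂⟩).map e.symm, fun k => (d₁ k, d₂ k), e.injective ?_⟩
  rw [map_mul, map_mul, e.apply_symm_apply, e.apply_symm_apply, he, he, diagonal_map rfl,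
    diagonal_map rfl]
  exact Prod.ext hd₁ hd₂

theorem isBezout (h : IsElementaryDivisorRing R) : IsBezout R := by
  refine IsBezout.iff_span_pair_isPrincipal.2 fun a b => ?_
  obtain ⟨P, Q, hP, hQ, d, hd⟩ := h 2 (vecMulVec ![1, 0] ![a, b])
  set w := ![a, b] ᵥ* Q
  rw [mul_vecMulVec, vecMulVec_mul] at hd
  have h01 : P 0 0 * w 1 = 0 := by
    simpa [vecMulVec_apply, mulVec, dotProduct] using congrFun (congrFun hd 0) 1
  have h10 : P 1 0 * w 0 = 0 := by
    simpa [vecMulVec_apply, mulVec, dotProduct] using congrFun (congrFun hd 1) 0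
  have hcol : P⁻¹ 0 0 * P 0 0 + P⁻¹ 0 1 * P 1 0 = 1 := by
    have := congrFun (congrFun (nonsing_inv_mul P ((isUnit_iff_isUnit_det P).1 hP)) 0) 0
    simpa [mul_apply, Fin.sum_univ_two] using this
  refine ⟨⟨w 0 + w 1, ?_⟩⟩
  rw [← Matrix.range_cons_cons_empty a b ![], ← Ideal.span_range_vecMul_of_isUnit _ hQ]
  refine le_antisymm ?_ ((Ideal.span_singleton_le_iff_mem _).2
    (Ideal.add_mem _ (Ideal.subset_span ⟨0, rfl⟩) (Ideal.subset_span ⟨1, rfl⟩)))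
  rw [Ideal.span_le, Set.range_subset_iff, Fin.forall_fin_two]
  exact ⟨Ideal.mem_span_singleton'.2 ⟨P⁻¹ 0 0 * P 0 0,
      by linear_combination P⁻¹ 0 0 * h01 - P⁻¹ 0 1 * h10 + w 0 * hcol⟩,
    Ideal.mem_span_singleton'.2 ⟨P⁻¹ 0 1 * P 1 0,
      by linear_combination P⁻¹ 0 1 * h10 - P⁻¹ 0 0 * h01 + w 1 * hcol⟩⟩

end IsElementaryDivisorRing

theorem mem_amalgamation_id {A : Type*} [CommRing A] {I : Ideal A} {p : A × A} :
    p ∈ amalgamation (RingHom.id A) I ↔ p.2 - p.1 ∈ I := Iff.rfl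

theorem Ideal.eq_top_of_isBezout_amalgamation {A : Type*} [CommRing A] [IsDomain A]
    {I : Ideal A} (hI : I ≠ ⊥) [IsBezout (amalgamation (RingHom.id A) I)] : I = ⊤ := by
  obtain ⟨i, hiI, hi0⟩ := Submodule.exists_mem_ne_zero_of_ne_bot hI
  let x : amalgamation (RingHom.id A) I := ⟨(i, 0), by simpa [mem_amalgamation_id] using hiI⟩
  let y : amalgamation (RingHom.id A) I := ⟨(0, i), by simpa [mem_amalgamation_id] using hiI⟩
  obtain ⟨z, hz⟩ : ∃ z, Ideal.span {x, y} = Ideal.span {z} :=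
    Submodule.IsPrincipal.principal _
  obtain ⟨r, s, rfl⟩ : ∃ r s, r * x + s * y = z := by
    rw [← Ideal.mem_span_pair, hz]; exact Ideal.mem_span_singleton_self z
  obtain ⟨t, htx⟩ : ∃ t, t * (r * x + s * y) = x := by
    rw [← Ideal.mem_span_singleton', ← hz]; exact Ideal.subset_span (Set.mem_insert x {y})
  obtain ⟨u, huy⟩ : ∃ u, u * (r * x + s * y) = y := by
    rw [← Ideal.mem_span_singleton', ← hz]
    exact Ideal.subset_span (Set.mem_insert_of_mem x rfl)
  have htx₁ := congrArg (fun p => p.1.1) htx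
  have huy₁ := congrArg (fun p => p.1.1) huy
  have huy₂ := congrArg (fun p => p.1.2) huy
  simp only [Subring.coe_mul, Subring.coe_add, Prod.fst_mul, Prod.fst_add, Prod.snd_mul,
    Prod.snd_add, mul_zero, add_zero, zero_add, mul_eq_zero, x, y] at htx₁ huy₁ huy₂
  have hr : (r : A × A).1 ≠ 0 := by
    rintro hr
    simp [hr, eq_comm, hi0] at htx₁
  have hu₁ : (u : A × A).1 = 0 := by simpa [hr, hi0] using huy₁
  have hu₂ : IsUnit (u : A × A).2 :=
    IsUnit.of_mul_eq_one (s : A × A).2 (mul_right_cancel₀ hi0 (by linear_combination huy₂))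
  refine I.eq_top_of_isUnit_mem ?_ hu₂
  simpa [hu₁] using mem_amalgamation_id.1 u.prop

theorem amalgamation_id_top {A : Type*} [CommRing A] :
    amalgamation (RingHom.id A) (⊤ : Ideal A) = ⊤ :=
  (Subring.eq_top_iff' _).2 fun _ => Submodule.mem_top (R := A)

theorem stmt13 {A : Type*} [CommRing A] [IsDomain A] (I : Ideal A) (hI : I ≠ ⊥) :
    IsElementaryDivisorRing (amalgamation (RingHom.id A) I) ↔
      IsElementaryDivisorRing A ∧ I = ⊤ := by
  constructor
  · intro h
    have := h.isBezout
    refine ⟨h.of_surjective ((RingHom.fst A A).comp (amalgamation (RingHom.id A) I).subtype)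
      fun a => ⟨⟨(a, a), by simp [mem_amalgamation_id]⟩, rfl⟩,
      Ideal.eq_top_of_isBezout_amalgamation hI⟩
  · rintro ⟨hA, rfl⟩
    let e := (RingEquiv.subringCongr amalgamation_id_top).trans (Subring.topEquiv (R := A × A))
    exact (hA.prod hA).of_surjective e.symm.toRingHom e.symm.surjective
end

section
/- Let A and B be integral domains, J an ideal of B, and f : A → B an injective ring homomorphism. Then the following are equivalent: (1) A ⋈^f J is an Hermite ring; (2) A ⋈^f J is a Bézout ring; (3) either J = B and A and B are Bézout rings, or J ≠ B, f(A) ∩ J = 0 and f(A)+J is a Bézout ring. -/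
/-!
Hermite rings are Bézout, Bézout domains are Hermite, and being Hermite passes to products and
to surjective images. If `J = B` then `A ⋈^f J = A × B`. If `J ≠ B`, Bézoutness of `A ⋈^f J`
forces `f(A) ∩ J = 0`: for `f a ∈ J` nonzero, a generator `d` of the ideal spanned by `(a, 0)`
and `(0, f a)` has `d₂ ≠ 0`, so the cofactor `x` with `(a, 0) = d x` has `x₂ = 0`, whence
`f x₁ ∈ J`, while `x₁` is a unit because `d₁ ∈ aA`. Once `f(A) ∩ J = 0` and `f` is injective,
the second projection `A ⋈^f J → f(A) + J` is an isomorphism onto a domain.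
-/

section HermiteRing

variable {R S : Type*} [CommRing R] [CommRing S]

theorem isHermiteRing_iff_isCoprime :
    IsHermiteRing R ↔
      ∀ a b : R, ∃ a₁ b₁ d : R, a = a₁ * d ∧ b = b₁ * d ∧ IsCoprime a₁ b₁ := by
  simp only [IsHermiteRing, Ideal.span_insert, Ideal.sup_eq_top_iff_isCoprime]

theorem IsHermiteRing.isBezout (h : IsHermiteRing R) : IsBezout R := by
  refine IsBezout.iff_span_pair_isPrincipal.mpr fun a b => ?_
  obtain ⟨a₁, b₁, d, rfl, rfl, hab⟩ := h a b
  refine ⟨d, ?_⟩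
  calc Ideal.span {a₁ * d, b₁ * d}
      = Ideal.span {a₁, b₁} * Ideal.span {d} := by
        simp only [Ideal.span_insert, Ideal.sup_mul, Ideal.span_singleton_mul_span_singleton]
    _ = Ideal.span {d} := by rw [hab, Ideal.top_mul]

theorem IsBezout.isHermiteRing [IsDomain R] [IsBezout R] : IsHermiteRing R := by
  refine isHermiteRing_iff_isCoprime.mpr fun a b => ?_
  obtain ⟨a₁, ha⟩ := IsBezout.gcd_dvd_left a b
  obtain ⟨b₁, hb⟩ := IsBezout.gcd_dvd_right a b
  obtain ⟨u, v, huv⟩ := IsBezout.gcd_eq_sum a b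
  generalize IsBezout.gcd a b = d at ha hb huv
  subst ha hb
  by_cases hd : d = 0
  · exact ⟨1, 1, 0, by simp [hd], by simp [hd], isCoprime_one_left⟩
  refine ⟨a₁, b₁, d, mul_comm _ _, mul_comm _ _, u, v, mul_left_cancel₀ hd ?_⟩
  linear_combination huv

theorem IsHermiteRing.of_surjective {F : Type*} [FunLike F R S] [RingHomClass F R S] (g : F)
    (hg : Function.Surjective g) (h : IsHermiteRing R) : IsHermiteRing S := by
  rw [isHermiteRing_iff_isCoprime] at h ⊢
  intro a b
  obtain ⟨⟨a, rfl⟩, ⟨b, rfl⟩⟩ := hg a, hg b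
  obtain ⟨a₁, b₁, d, rfl, rfl, hab⟩ := h a b
  exact ⟨g a₁, g b₁, g d, map_mul g _ _, map_mul g _ _, hab.map (g : R →+* S)⟩

theorem IsHermiteRing.prod (hR : IsHermiteRing R) (hS : IsHermiteRing S) :
    IsHermiteRing (R × S) := by
  rw [isHermiteRing_iff_isCoprime] at hR hS ⊢
  intro a b
  obtain ⟨a₁, b₁, d, ha, hb, u, v, huv⟩ := hR a.1 b.1
  obtain ⟨a₁', b₁', d', ha', hb', u', v', huv'⟩ := hS a.2 b.2
  exact ⟨(a₁, a₁'), (b₁, b₁'), (d, d'), Prod.ext ha ha', Prod.ext hb hb',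
    (u, u'), (v, v'), Prod.ext huv huv'⟩

end HermiteRing

section Amalgamation

variable {A B : Type*} [CommRing A] [CommRing B] (f : A →+* B) (J : Ideal B)

theorem mem_amalgamation {p : A × B} : p ∈ amalgamation f J ↔ p.2 - f p.1 ∈ J := Iff.rfl

theorem amalgamation_top : amalgamation f ⊤ = ⊤ :=
  (Subring.eq_top_iff' _).mpr fun _ => (mem_amalgamation f ⊤).mpr Submodule.mem_top

noncomputable def amalgamationTopEquiv : amalgamation f ⊤ ≃+* A × B :=
  (RingEquiv.subringCongr (amalgamation_top f)).trans Subring.topEquiv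

def amalgamationToRangeAddIdeal : amalgamation f J →+* rangeAddIdeal f J :=
  ((RingHom.snd A B).comp (amalgamation f J).subtype).codRestrict _ fun p => ⟨p.1.1, p.2⟩

theorem amalgamationToRangeAddIdeal_surjective :
    Function.Surjective (amalgamationToRangeAddIdeal f J) :=
  fun ⟨b, a, h⟩ => ⟨⟨(a, b), h⟩, rfl⟩

theorem amalgamationToRangeAddIdeal_injective (hf : Function.Injective f)
    (h0 : ∀ a : A, f a ∈ J → f a = 0) :
    Function.Injective (amalgamationToRangeAddIdeal f J) := by
  rintro ⟨⟨a, b⟩, hp⟩ ⟨⟨a', b'⟩, hq⟩ h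
  obtain rfl : b = b' := congrArg Subtype.val h
  have hdiff : f (a' - a) ∈ J := by simpa using J.sub_mem hp hq
  obtain rfl : a' = a := sub_eq_zero.mp (hf (by rw [h0 _ hdiff, map_zero]))
  rfl

noncomputable def amalgamationEquivRangeAddIdeal (hf : Function.Injective f)
    (h0 : ∀ a : A, f a ∈ J → f a = 0) : amalgamation f J ≃+* rangeAddIdeal f J :=
  RingEquiv.ofBijective (amalgamationToRangeAddIdeal f J)
    ⟨amalgamationToRangeAddIdeal_injective f J hf h0,
      amalgamationToRangeAddIdeal_surjective f J⟩

end Amalgamation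

section Domain

variable {A B : Type*} [CommRing A] [IsDomain A] [CommRing B] [IsDomain B] (f : A →+* B)
  (J : Ideal B)

theorem eq_top_of_isBezout_amalgamation [IsBezout (amalgamation f J)] {a : A}
    (haJ : f a ∈ J) (ha : f a ≠ 0) : J = ⊤ := by
  have ha0 : a ≠ 0 := by rintro rfl; exact ha (map_zero f)
  let p : amalgamation f J := ⟨(a, 0), by simpa [mem_amalgamation] using J.neg_mem haJ⟩
  let q : amalgamation f J := ⟨(0, f a), by simpa [mem_amalgamation] using haJ⟩
  obtain ⟨x, hx⟩ := IsBezout.gcd_dvd_left p q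
  obtain ⟨y, hy⟩ := IsBezout.gcd_dvd_right p q
  obtain ⟨α, β, hαβ⟩ := IsBezout.gcd_eq_sum p q
  generalize IsBezout.gcd p q = d at hx hy hαβ
  have hx₁ : a = d.1.1 * x.1.1 := congrArg (fun z : amalgamation f J => z.1.1) hx
  have hx₂ : 0 = d.1.2 * x.1.2 := congrArg (fun z : amalgamation f J => z.1.2) hx
  have hy₂ : f a = d.1.2 * y.1.2 := congrArg (fun z : amalgamation f J => z.1.2) hy
  have hd₁ : α.1.1 * a = d.1.1 := by
    simpa [p, q] using congrArg (fun z : amalgamation f J => z.1.1) hαβ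
  have hx₁_unit : IsUnit x.1.1 := by
    refine IsUnit.of_mul_eq_one α.1.1 (mul_left_cancel₀ ha0 ?_)
    linear_combination x.1.1 * hd₁ - hx₁
  have hx₂_zero : x.1.2 = 0 :=
    (mul_eq_zero.mp hx₂.symm).resolve_left (left_ne_zero_of_mul (hy₂ ▸ ha))
  have hfx₁ : f x.1.1 ∈ J := by
    simpa [hx₂_zero] using J.neg_mem x.2
  exact Ideal.eq_top_of_isUnit_mem J hfx₁ (hx₁_unit.map f)

theorem amalgamation_dichotomy_of_isBezout [IsBezout (amalgamation f J)] :
    (J = ⊤ ∧ IsBezout A ∧ IsBezout B) ∨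
      (J ≠ ⊤ ∧ (∀ a : A, f a ∈ J → f a = 0) ∧ IsBezout (rangeAddIdeal f J)) := by
  obtain rfl | hJ := eq_or_ne J ⊤
  · have : IsBezout (A × B) :=
      (amalgamationTopEquiv f).surjective.isBezout (amalgamationTopEquiv f).toRingHom
    exact Or.inl ⟨rfl, Prod.fst_surjective.isBezout (RingHom.fst A B),
      Prod.snd_surjective.isBezout (RingHom.snd A B)⟩
  · exact Or.inr ⟨hJ, fun a ha => by_contra (hJ ∘ eq_top_of_isBezout_amalgamation f J ha),
      (amalgamationToRangeAddIdeal_surjective f J).isBezout _⟩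

theorem isHermiteRing_amalgamation_of_dichotomy (hf : Function.Injective f)
    (h : (J = ⊤ ∧ IsBezout A ∧ IsBezout B) ∨
      (J ≠ ⊤ ∧ (∀ a : A, f a ∈ J → f a = 0) ∧ IsBezout (rangeAddIdeal f J))) :
    IsHermiteRing (amalgamation f J) := by
  rcases h with ⟨rfl, hA, hB⟩ | ⟨-, h0, hR⟩
  · let e := (amalgamationTopEquiv f).symm
    exact (IsBezout.isHermiteRing.prod IsBezout.isHermiteRing).of_surjective e e.surjective
  · let e := (amalgamationEquivRangeAddIdeal f J hf h0).symm
    exact IsBezout.isHermiteRing.of_surjective e e.surjective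

end Domain

theorem stmt16 {A B : Type*} [CommRing A] [IsDomain A] [CommRing B] [IsDomain B]
    (f : A →+* B) (hf : Function.Injective f) (J : Ideal B) :
    (IsHermiteRing (amalgamation f J) ↔ IsBezout (amalgamation f J)) ∧
    (IsBezout (amalgamation f J) ↔
      (J = ⊤ ∧ IsBezout A ∧ IsBezout B) ∨
      (J ≠ ⊤ ∧ (∀ a : A, f a ∈ J → f a = 0) ∧ IsBezout (rangeAddIdeal f J))) := by
  have dichotomy (_ : IsBezout (amalgamation f J)) := amalgamation_dichotomy_of_isBezout f J
  have hermite := isHermiteRing_amalgamation_of_dichotomy f J hf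
  exact ⟨⟨IsHermiteRing.isBezout, hermite ∘ dichotomy⟩,
    ⟨dichotomy, IsHermiteRing.isBezout ∘ hermite⟩⟩
end
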